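/- arXiv:1602.01807 — 5 statements merged into one kernel-verified Lean document; each statement's English description precedes it below -/
import Mathlib

section
/- Let F_q be a finite field of odd characteristic, ψ a nontrivial multiplicative character on F_q with ψ ≠ η where η is the quadratic character. Then G(ψ)·G(ψη) = ψ̄(4)·G(ψ^2)·G(η). -/
/-- The Gauss sum `G(ψ) = ∑ₓ ψ(x) ζ_p^{Tr(x)}` over a finite field of characteristic `p`,
with values in `ℂ`. -/
noncomputable def gaussC (p : ℕ) (F : Type*) [Field F] [Fintype F] [Algebra (ZMod p) F]
    (ψ : MulChar F ℂ) : ℂ :=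
  ∑ x : F, ψ x *
    Complex.exp (2 * Real.pi * Complex.I * ((Algebra.trace (ZMod p) F x).val : ℂ) / p)

open Finset

/-- The standard additive character on `F`, composition of the trace with `ZMod.stdAddChar`. -/
noncomputable def eAddDH (p : ℕ) [NeZero p] (F : Type*) [Field F] [Fintype F]
    [Algebra (ZMod p) F] : AddChar F ℂ :=
  (ZMod.stdAddChar (N := p)).compAddMonoidHom (Algebra.trace (ZMod p) F).toAddMonoidHom

lemma eAddDH_apply (p : ℕ) [NeZero p] (F : Type*) [Field F] [Fintype F] [Algebra (ZMod p) F]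
    (x : F) :
    eAddDH p F x =
      Complex.exp (2 * Real.pi * Complex.I * ((Algebra.trace (ZMod p) F x).val : ℂ) / p) := by
  rw [eAddDH, AddChar.compAddMonoidHom_apply, ZMod.stdAddChar_apply, ZMod.toCircle_apply]
  rfl

lemma gaussC_eq_gaussSum (p : ℕ) [NeZero p] (F : Type*) [Field F] [Fintype F]
    [Algebra (ZMod p) F] (χ : MulChar F ℂ) :
    gaussC p F χ = gaussSum χ (eAddDH p F) := by
  rw [gaussC, gaussSum]
  exact Finset.sum_congr rfl fun x _ => by rw [eAddDH_apply]

lemma eAddDH_isPrimitive (p : ℕ) [Fact p.Prime] (F : Type*) [Field F] [Fintype F]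
    [Algebra (ZMod p) F] : (eAddDH p F).IsPrimitive := by
  haveI : CharP F p := charP_of_injective_algebraMap (algebraMap (ZMod p) F).injective p
  haveI : FiniteDimensional (ZMod p) F := Module.Finite.of_finite
  refine AddChar.IsPrimitive.of_ne_one ?_
  obtain ⟨x, hx⟩ := Algebra.trace_surjective (ZMod p) F 1
  intro h
  have h1 : eAddDH p F x = 1 := by rw [h]; rfl
  have h2 : ZMod.stdAddChar (N := p) (1 : ZMod p) = ZMod.stdAddChar (0 : ZMod p) := by
    rw [AddChar.map_zero_eq_one]
    rw [eAddDH, AddChar.compAddMonoidHom_apply] at h1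
    simpa [hx] using h1
  exact one_ne_zero (ZMod.injective_stdAddChar h2)

private lemma char_sq_eq {F : Type*} [Field F] [Fintype F] [DecidableEq F]
    {ψ : MulChar F ℂ} (hψ1 : ψ ≠ 1) (hψ2 : ψ ^ 2 = 1) :
    ψ = (quadraticChar F).ringHomComp (Int.castRingHom ℂ) := by
  obtain ⟨b, hb⟩ := MulChar.ne_one_iff.mp hψ1
  have hsq : ∀ x : F, IsSquare x → x ≠ 0 → ψ x = 1 := by
    rintro x ⟨c, rfl⟩ hx
    have hc : IsUnit c := by
      rcases mul_ne_zero_iff.mp hx with ⟨h, -⟩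
      exact isUnit_iff_ne_zero.mpr h
    rw [map_mul, ← MulChar.mul_apply, ← sq, hψ2, MulChar.one_apply hc]
  have hval : ∀ x : F, x ≠ 0 → ψ x = 1 ∨ ψ x = -1 := by
    intro x hx
    have : ψ x * ψ x = 1 := by
      rw [← MulChar.mul_apply, ← sq, hψ2, MulChar.one_apply (isUnit_iff_ne_zero.mpr hx)]
    exact mul_self_eq_one_iff.mp this
  have hbv : ψ (b : F) = -1 := (hval b b.ne_zero).resolve_left hb
  have hbns : ¬ IsSquare (b : F) := fun h => by
    rw [hsq _ h b.ne_zero] at hbv; norm_num at hbv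
  have hqb : quadraticChar F (b : F) = -1 := quadraticChar_neg_one_iff_not_isSquare.mpr hbns
  ext x
  rw [MulChar.ringHomComp_apply]
  have hx : (x : F) ≠ 0 := x.ne_zero
  by_cases h : IsSquare (x : F)
  · rw [hsq _ h hx, (quadraticChar_one_iff_isSquare hx).mpr h]
    norm_num
  · have hqx : quadraticChar F (x : F) = -1 := quadraticChar_neg_one_iff_not_isSquare.mpr h
    have h1 : IsSquare ((x : F) * (b : F)⁻¹) := by
      have hne : (x : F) * (b : F)⁻¹ ≠ 0 := by
        simp [hx]
      have : quadraticChar F ((x : F) * (b : F)⁻¹) = 1 := by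
        have hinv : quadraticChar F ((b : F)⁻¹) = -1 := by
          have := map_mul (quadraticChar F) (b : F) ((b : F)⁻¹)
          rw [mul_inv_cancel₀ b.ne_zero, map_one, hqb] at this
          linarith
        rw [map_mul, hqx, hinv]; ring
      exact (quadraticChar_one_iff_isSquare hne).mp this
    have hne : (x : F) * (b : F)⁻¹ ≠ 0 := by simp [hx]
    have hone : ψ ((x : F) * (b : F)⁻¹) = 1 := hsq _ h1 hne
    have : ψ (x : F) = -1 := by
      have h2 : ψ ((x : F) * (b : F)⁻¹) * ψ (b : F) = ψ (x : F) := by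
        rw [← map_mul, inv_mul_cancel_right₀ b.ne_zero]
      rw [hone, hbv, one_mul] at h2
      exact h2.symm
    rw [this, hqx]; norm_num

private lemma jacobi_key {F : Type*} [Field F] [Fintype F] [DecidableEq F] (hF : ringChar F ≠ 2)
    {ψ : MulChar F ℂ} (hψ : ψ ≠ 1) :
    jacobiSum ψ ψ =
      ψ⁻¹ 4 * jacobiSum ((quadraticChar F).ringHomComp (Int.castRingHom ℂ)) ψ := by
  set η := (quadraticChar F).ringHomComp (Int.castRingHom ℂ) with hη
  have h2 : (2 : F) ≠ 0 := Ring.two_ne_zero hF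
  have h4 : (4 : F) ≠ 0 := by
    have h : (4 : F) = 2 * 2 := by norm_num
    rw [h]; exact mul_ne_zero h2 h2
  have step1 : jacobiSum ψ ψ = ψ⁻¹ 4 * ∑ t : F, ψ (1 - t ^ 2) := by
    rw [jacobiSum]
    calc ∑ x : F, ψ x * ψ (1 - x)
        = ∑ t : F, ψ ((1 + t) * 2⁻¹) * ψ (1 - (1 + t) * 2⁻¹) :=
          (Equiv.sum_comp ((Equiv.addLeft (1 : F)).trans
            (Equiv.mulRight₀ (2⁻¹ : F) (inv_ne_zero h2))) (fun x => ψ x * ψ (1 - x))).symm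
      _ = ∑ t : F, ψ⁻¹ 4 * ψ (1 - t ^ 2) := by
          refine Finset.sum_congr rfl fun t _ => ?_
          rw [← map_mul]
          have h : ((1 + t) * 2⁻¹) * (1 - (1 + t) * 2⁻¹) = (1 - t ^ 2) * 4⁻¹ := by
            field_simp
            ring
          rw [h, map_mul, ← MulChar.inv_apply' ψ 4]
          ring
      _ = ψ⁻¹ 4 * ∑ t : F, ψ (1 - t ^ 2) := by rw [mul_sum]
  have step2 : ∑ t : F, ψ (1 - t ^ 2) = jacobiSum η ψ := by
    have fib : ∑ t : F, ψ (1 - t ^ 2) = ∑ u : F, (η u + 1) * ψ (1 - u) := by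
      rw [← Finset.sum_fiberwise' univ (fun t : F => t ^ 2) (fun u => ψ (1 - u))]
      refine Finset.sum_congr rfl fun u _ => ?_
      rw [Finset.sum_const, nsmul_eq_mul]
      congr 1
      have hcard := quadraticChar_card_sqrts hF u
      have hfil : {x : F | x ^ 2 = u}.toFinset = univ.filter (fun t : F => t ^ 2 = u) := by
        ext t; simp
      rw [hfil] at hcard
      have : ((#(univ.filter (fun t : F => t ^ 2 = u)) : ℤ) : ℂ) =
          ((quadraticChar F u + 1 : ℤ) : ℂ) := by exact_mod_cast congrArg (Int.cast : ℤ → ℂ) hcard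
      push_cast at this ⊢
      rw [this, hη, MulChar.ringHomComp_apply]
      simp
    rw [fib]
    have : ∀ u : F, (η u + 1) * ψ (1 - u) = η u * ψ (1 - u) + ψ (1 - u) := fun u => by ring
    simp_rw [this, Finset.sum_add_distrib]
    have hz : ∑ u : F, ψ (1 - u) = 0 := by
      have := Equiv.sum_comp (Equiv.subLeft (1 : F)) ψ
      simp only [Equiv.subLeft_apply] at this
      rw [this]
      exact MulChar.sum_eq_zero_of_ne_one hψ
    rw [hz, add_zero, jacobiSum]
  rw [step1, step2]

theorem stmt7 (p s : ℕ) [Fact p.Prime] (hp : p ≠ 2) (hs : 0 < s)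
    (F : Type*) [Field F] [Fintype F] [DecidableEq F] [Algebra (ZMod p) F]
    (hcard : Fintype.card F = p ^ s)
    (η : MulChar F ℂ) (hη : η = (quadraticChar F).ringHomComp (Int.castRingHom ℂ))
    (ψ : MulChar F ℂ) (hψ : ψ ≠ 1) (hψη : ψ ≠ η) :
    gaussC p F ψ * gaussC p F (ψ * η) = ψ⁻¹ (4 : F) * gaussC p F (ψ ^ 2) * gaussC p F η := by
  haveI : CharP F p := charP_of_injective_algebraMap (algebraMap (ZMod p) F).injective p
  have hrc : ringChar F = p := ringChar.eq F p
  have hF2 : ringChar F ≠ 2 := by rw [hrc]; exact hp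
  have hq : ((Fintype.card F : ℂ)) ≠ 0 := Nat.cast_ne_zero.mpr Fintype.card_ne_zero
  set e := eAddDH p F with he
  have heprim : e.IsPrimitive := eAddDH_isPrimitive p F
  have hη2 : η * η = 1 := by
    have : η ^ 2 = 1 := by
      rw [hη]
      exact ((quadraticChar_isQuadratic F).comp _).sq_eq_one
    rwa [sq] at this
  have hψη1 : ψ * η ≠ 1 := by
    intro h
    apply hψη
    calc ψ = ψ * (η * η) := by rw [hη2, mul_one]
    _ = (ψ * η) * η := by rw [mul_assoc]
    _ = η := by rw [h, one_mul]
  have hψ2 : ψ ^ 2 ≠ 1 := by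
    intro h
    exact hψη (char_sq_eq hψ h ▸ hη ▸ rfl)
  have hψψ : ψ * ψ ≠ 1 := by rwa [← sq]
  have hηψ1 : η * ψ ≠ 1 := by rwa [mul_comm]
  have h1 : gaussSum (η * ψ) e * jacobiSum η ψ = gaussSum η e * gaussSum ψ e :=
    jacobiSum_mul_nontrivial hηψ1 e
  have h2 : gaussSum (ψ * ψ) e * jacobiSum ψ ψ = gaussSum ψ e * gaussSum ψ e :=
    jacobiSum_mul_nontrivial hψψ e
  have hkey : jacobiSum ψ ψ = ψ⁻¹ 4 * jacobiSum η ψ := by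
    rw [hη]
    exact jacobi_key hF2 hψ
  have hgψ : gaussSum ψ e ≠ 0 := gaussSum_ne_zero_of_nontrivial hq hψ heprim
  rw [gaussC_eq_gaussSum, gaussC_eq_gaussSum, gaussC_eq_gaussSum, gaussC_eq_gaussSum]
  apply mul_left_cancel₀ hgψ
  rw [show ψ * η = η * ψ from mul_comm ψ η, show ψ ^ 2 = ψ * ψ from sq ψ]
  linear_combination (- gaussSum (η * ψ) e) * h2 +
    (gaussSum (η * ψ) e * gaussSum (ψ * ψ) e) * hkey +
    (ψ⁻¹ 4 * gaussSum (ψ * ψ) e) * h1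
end

section
/- Let ψ be a multiplicative character on F_q and ψ' its lift to F_{q^r} via the norm map. Then ψ' is a multiplicative character on F_{q^r} having the same order as ψ. Moreover, a character λ on F_{q^r} equals the lift of some character on F_q if and only if the order of λ divides q-1. -/
/-!
Lifting along the norm is precomposition with the norm `Eˣ →* Fˣ`, which is surjective, so the
lift is an injective homomorphism of character groups and preserves orders. The characters of
`E` form a cyclic group of order `|Eˣ|`, and `q - 1 = |Fˣ|` divides `|Eˣ|`; a cyclic group has
exactly one subgroup of order `q - 1`, namely the elements killed by `q - 1`. The image of the
lift has order `q - 1`, so it is that subgroup.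
-/

namespace MulChar

variable {M N R : Type*} [CommMonoid M] [CommMonoid N] [CommMonoidWithZero R]

noncomputable def comapUnits (f : Mˣ →* Nˣ) : MulChar N R →* MulChar M R :=
  (mulEquivToUnitHom.symm : (Mˣ →* Rˣ) ≃* MulChar M R).toMonoidHom.comp
    ((MonoidHom.compHom' f).comp mulEquivToUnitHom.toMonoidHom)

@[simp]
theorem comapUnits_apply_coe (f : Mˣ →* Nˣ) (χ : MulChar N R) (a : Mˣ) :
    comapUnits f χ a = χ (f a) := by
  simp [comapUnits]

theorem comapUnits_injective {f : Mˣ →* Nˣ} (hf : Function.Surjective f) :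
    Function.Injective (comapUnits f : MulChar N R →* MulChar M R) := by
  rw [injective_iff_map_eq_one]
  intro χ hχ
  refine MulChar.ext fun b => ?_
  obtain ⟨a, rfl⟩ := hf b
  rw [← comapUnits_apply_coe, hχ, one_apply_coe, one_apply_coe]

instance isCyclic {R : Type*} [CommRing R] [Finite M] [IsCyclic Mˣ]
    [HasEnoughRootsOfUnity R (Monoid.exponent Mˣ)] : IsCyclic (MulChar M R) :=
  (MulEquiv.isCyclic (mulEquiv_units M R).some).mpr inferInstance

end MulChar

theorem Subgroup.eq_ker_powMonoidHom_of_natCard_eq {G : Type*} [CommGroup G] [IsCyclic G]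
    [Finite G] {H : Subgroup G} {d : ℕ} (hd : d ∣ Nat.card G) (hH : Nat.card H = d) :
    H = (powMonoidHom d : G →* G).ker := by
  refine Subgroup.eq_of_le_of_card_ge (fun g hg => ?_) ?_
  · rw [MonoidHom.mem_ker, powMonoidHom_apply, ← orderOf_dvd_iff_pow_eq_one, ← hH]
    exact H.orderOf_dvd_natCard hg
  · rw [IsCyclic.card_powMonoidHom_ker, Nat.gcd_eq_right hd, hH]

section FiniteField

variable (F E : Type*) [Field F] [Field E] [Algebra F E] [Finite E]

noncomputable def normLift (R : Type*) [CommMonoidWithZero R] : MulChar F R →* MulChar E R :=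
  MulChar.comapUnits (Units.map (Algebra.norm F : E →* F))

theorem normLift_injective (R : Type*) [CommMonoidWithZero R] :
    Function.Injective (normLift F E R) :=
  MulChar.comapUnits_injective (FiniteField.unitsMap_norm_surjective F E)

variable {F E}

theorem normLift_apply {R : Type*} [CommMonoidWithZero R] [Nontrivial R] (ψ : MulChar F R)
    (x : E) : normLift F E R ψ x = ψ (Algebra.norm F x) := by
  rcases eq_or_ne x 0 with rfl | hx
  · rw [Algebra.norm_zero, MulChar.map_zero, MulChar.map_zero]
  · exact MulChar.comapUnits_apply_coe _ ψ (Units.mk0 x hx)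

variable (F E)

theorem range_normLift_eq_ker_powMonoidHom (R : Type*) [CommRing R] [IsDomain R]
    [HasEnoughRootsOfUnity R (Monoid.exponent Eˣ)]
    [HasEnoughRootsOfUnity R (Monoid.exponent Fˣ)] :
    (normLift F E R).range = (powMonoidHom (Nat.card Fˣ) : MulChar E R →* _).ker := by
  have := Finite.of_injective _ (algebraMap F E).injective
  apply Subgroup.eq_ker_powMonoidHom_of_natCard_eq
  · rw [MulChar.card_eq_card_units_of_hasEnoughRootsOfUnity]
    exact Subgroup.card_dvd_of_injective _ (Units.map_injective (algebraMap F E).injective)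
  · rw [← Nat.card_congr (MonoidHom.ofInjective (normLift_injective F E R)).toEquiv,
      MulChar.card_eq_card_units_of_hasEnoughRootsOfUnity]

end FiniteField

theorem stmt9_general
    (F E : Type*) [Field F] [Fintype F] [Field E] [Fintype E] [Algebra F E] :
    (∀ ψ : MulChar F ℂ, ∃ ψ' : MulChar E ℂ,
      (∀ x : E, ψ' x = ψ (Algebra.norm F x)) ∧ orderOf ψ' = orderOf ψ) ∧
    (∀ lam : MulChar E ℂ,
      (∃ ψ : MulChar F ℂ, ∀ x : E, lam x = ψ (Algebra.norm F x)) ↔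
        orderOf lam ∣ Fintype.card F - 1) := by
  have hinj := normLift_injective F E ℂ
  refine ⟨fun ψ => ⟨normLift F E ℂ ψ, normLift_apply ψ, orderOf_injective _ hinj ψ⟩,
    fun lam => ?_⟩
  rw [orderOf_dvd_iff_pow_eq_one, ← Nat.card_eq_fintype_card, ← Nat.card_units,
    ← powMonoidHom_apply, ← MonoidHom.mem_ker, ← range_normLift_eq_ker_powMonoidHom,
    MonoidHom.mem_range]
  simp only [DFunLike.ext_iff, normLift_apply, eq_comm]

theorem stmt9 (r : ℕ) (hr : 0 < r)
    (F E : Type*) [Field F] [Fintype F] [Field E] [Fintype E] [Algebra F E]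
    (hE : Fintype.card E = Fintype.card F ^ r) :
    (∀ ψ : MulChar F ℂ, ∃ ψ' : MulChar E ℂ,
      (∀ x : E, ψ' x = ψ (Algebra.norm F x)) ∧ orderOf ψ' = orderOf ψ) ∧
    (∀ lam : MulChar E ℂ,
      (∃ ψ : MulChar F ℂ, ∀ x : E, lam x = ψ (Algebra.norm F x)) ↔
        orderOf lam ∣ Fintype.card F - 1) :=
  stmt9_general F E
end

section
/- Let p be a prime with p ≡ 3 or p ≡ 5 (mod 8), let r ≥ 3 and k ≤ r be positive integers, and let ξ be a primitive 2^k-th root of unity in the complex numbers. Then Σ_{v=0}^{2^{r-2}-1} ξ^{p^v} equals 2^{r-3}(ξ + ξ^p) if k ≤ 3, and equals 0 if k > 3. -/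
lemma step_sq (a t : ℕ) (h : a ≡ 1 + 2^(t+2) [MOD 2^(t+3)]) :
    a^2 ≡ 1 + 2^(t+3) [MOD 2^(t+4)] := by
  rw [← Int.natCast_modEq_iff] at h ⊢
  obtain ⟨q, hq⟩ := h.dvd
  push_cast at hq ⊢
  have hq' : (a : ℤ) = 1 + 2^(t+2) - 2^(t+3) * q := by linarith
  rw [Int.modEq_iff_dvd]
  exact ⟨-(2^t - q + 2^(t+2)*q^2 - 2^(t+2)*q), by rw [hq']; ring⟩

lemma lemA (p : ℕ) (hodd : p % 2 = 1) : p^2 ≡ 1 [MOD 8] := by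
  have h8 : p % 8 = 1 ∨ p % 8 = 3 ∨ p % 8 = 5 ∨ p % 8 = 7 := by omega
  show p^2 % 8 = 1 % 8
  rw [Nat.pow_mod]
  rcases h8 with h | h | h | h <;> rw [h]

lemma lemB (p : ℕ) (hp : p % 8 = 3 ∨ p % 8 = 5) :
    ∀ j, p^(2^(j+1)) ≡ 1 + 2^(j+3) [MOD 2^(j+4)] := by
  intro j
  induction j with
  | zero =>
    have h16 : p % 16 = 3 ∨ p % 16 = 5 ∨ p % 16 = 11 ∨ p % 16 = 13 := by omega
    have h9 : p^2 % 16 = 9 := by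
      rw [Nat.pow_mod]
      rcases h16 with h | h | h | h <;> rw [h]
    show p^(2^1) % 2^4 = (1 + 2^3) % 2^4
    norm_num [h9]
  | succ j ih =>
    have h : p^(2^(j+2)) = (p^(2^(j+1)))^2 := by
      rw [← pow_mul, ← pow_succ]
    rw [h]
    exact step_sq _ (j+1) ih

lemma lemC (p : ℕ) (hp : p % 8 = 3 ∨ p % 8 = 5) (j : ℕ) :
    p^(2^(j+2)) ≡ 1 [MOD 2^(j+4)] := by
  have h : p^(2^(j+2)) = (p^(2^(j+1)))^2 := by rw [← pow_mul, ← pow_succ]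
  rw [h]
  have := (lemB p hp j).pow 2
  refine this.trans ?_
  have hexp : (1 + 2^(j+3))^2 = 1 + 2^(j+4) * (1 + 2^(j+2)) := by ring
  show (1 + 2^(j+3))^2 % 2^(j+4) = 1 % 2^(j+4)
  rw [hexp, Nat.add_mul_mod_self_left]

lemma sum_periodic (f : ℕ → ℂ) (d : ℕ) (hf : ∀ v, f (v + d) = f v) :
    ∀ m, ∑ v ∈ Finset.range (m * d), f v = m • ∑ v ∈ Finset.range d, f v := by
  have hshift : ∀ n v, f (n * d + v) = f v := by
    intro n
    induction n with
    | zero => simp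
    | succ n ih =>
      intro v
      have h : (n+1)*d + v = (n*d + v) + d := by ring
      rw [h, hf, ih]
  intro m
  induction m with
  | zero => simp
  | succ m ih =>
    rw [Nat.succ_mul, Finset.sum_range_add, ih, succ_nsmul]
    congr 1
    exact Finset.sum_congr rfl fun v _ => hshift m v

theorem stmt10 (p r k : ℕ) [Fact p.Prime] (hp : p % 8 = 3 ∨ p % 8 = 5)
    (hr : 3 ≤ r) (hk : 1 ≤ k) (hkr : k ≤ r)
    (ξ : ℂ) (hξ : IsPrimitiveRoot ξ (2 ^ k)) :
    (k ≤ 3 → ∑ v ∈ Finset.range (2 ^ (r - 2)), ξ ^ (p ^ v) = 2 ^ (r - 3) * (ξ + ξ ^ p)) ∧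
    (3 < k → ∑ v ∈ Finset.range (2 ^ (r - 2)), ξ ^ (p ^ v) = 0) := by
  have hodd : p % 2 = 1 := by omega
  have hone : ξ ^ (2^k : ℕ) = 1 := hξ.pow_eq_one
  have hkey : ∀ c : ℕ, ξ ^ c = ξ ^ (c % 2^k) := by
    intro c
    conv_lhs => rw [← Nat.div_add_mod c (2^k)]
    rw [pow_add, pow_mul, hone, one_pow, one_mul]
  have hper : ∀ a b : ℕ, a ≡ b [MOD 2^k] → ξ ^ a = ξ ^ b := by
    intro a b hab
    rw [hkey a, hkey b, hab]
  constructor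
  · -- k ≤ 3
    intro hk3
    have hdvd : (2:ℕ)^k ∣ 8 := by
      have : (8:ℕ) = 2^3 := by norm_num
      rw [this]; exact pow_dvd_pow 2 hk3
    have hA : p^2 ≡ 1 [MOD 2^k] := (lemA p hodd).of_dvd hdvd
    have hper2 : ∀ v, ξ^(p^(v+2)) = ξ^(p^v) := by
      intro v
      refine hper _ _ ?_
      calc p^(v+2) = p^v * p^2 := by rw [pow_add]
        _ ≡ p^v * 1 [MOD 2^k] := hA.mul_left _
        _ = p^v := by rw [mul_one]
    have hsplit : 2^(r-2) = 2^(r-3) * 2 := by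
      rw [← pow_succ]
      congr 1
      omega
    rw [hsplit, sum_periodic _ 2 hper2]
    rw [Finset.sum_range_succ, Finset.sum_range_one, pow_zero, pow_one, pow_one]
    rw [nsmul_eq_mul]
    push_cast
    ring
  · -- k > 3
    intro hk3
    obtain ⟨j, rfl⟩ : ∃ j, k = j + 4 := ⟨k - 4, by omega⟩
    have hB := lemB p hp j
    have hC := lemC p hp j
    -- ξ^(2^(j+3)) = -1
    have hneg : ξ ^ ((2:ℕ)^(j+3)) = -1 := by
      have h2 : (ξ ^ ((2:ℕ)^(j+3)))^2 = 1 := by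
        rw [← pow_mul, ← pow_succ]
        exact hone
      have hne : ξ ^ ((2:ℕ)^(j+3)) ≠ 1 := by
        intro h
        have := (hξ.pow_eq_one_iff_dvd _).mp h
        have hle := Nat.le_of_dvd (by positivity) this
        have : (2:ℕ)^(j+3) < 2^(j+4) := by
          exact Nat.pow_lt_pow_right (by norm_num) (by omega)
        omega
      have hfac : (ξ ^ ((2:ℕ)^(j+3)) - 1) * (ξ ^ ((2:ℕ)^(j+3)) + 1) = 0 := by
        linear_combination h2
      rcases mul_eq_zero.mp hfac with h | h
      · exact absurd (sub_eq_zero.mp h) hne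
      · linear_combination h
    have hflip : ∀ v, ξ^(p^(2^(j+1) + v)) = - ξ^(p^v) := by
      intro v
      have h1 : ξ^(p^(2^(j+1) + v)) = ξ^((1 + 2^(j+3)) * p^v) := by
        refine hper _ _ ?_
        calc p^(2^(j+1) + v) = p^(2^(j+1)) * p^v := by rw [pow_add]
          _ ≡ (1 + 2^(j+3)) * p^v [MOD 2^(j+4)] := hB.mul_right _
      rw [h1, add_mul, one_mul, pow_add, pow_mul, hneg]
      have hoddpv : Odd (p^v) := (Nat.odd_iff.mpr hodd).pow
      rw [hoddpv.neg_one_pow]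
      ring
    have hperd : ∀ v, ξ^(p^(v + 2^(j+2))) = ξ^(p^v) := by
      intro v
      refine hper _ _ ?_
      calc p^(v + 2^(j+2)) = p^v * p^(2^(j+2)) := by rw [pow_add]
        _ ≡ p^v * 1 [MOD 2^(j+4)] := hC.mul_left _
        _ = p^v := by rw [mul_one]
    have hS : ∑ v ∈ Finset.range (2^(j+2)), ξ^(p^v) = 0 := by
      have hsplit : (2:ℕ)^(j+2) = 2^(j+1) + 2^(j+1) := by
        rw [pow_succ]; ring
      rw [hsplit, Finset.sum_range_add]
      have : ∑ v ∈ Finset.range (2^(j+1)), ξ^(p^(2^(j+1) + v))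
           = - ∑ v ∈ Finset.range (2^(j+1)), ξ^(p^v) := by
        rw [← Finset.sum_neg_distrib]
        exact Finset.sum_congr rfl fun v _ => hflip v
      rw [this, add_neg_cancel]
    have hsplit : (2:ℕ)^(r-2) = 2^(r-(j+4)) * 2^(j+2) := by
      rw [← pow_add]
      congr 1
      omega
    rw [hsplit, sum_periodic _ _ hperd, hS, smul_zero]
end

section
/- Let q be an odd prime power, m a positive integer with 2^m | (q-1), k ≥ 2 an even integer, b_1,...,b_k ∈ F_q^*, and let N denote the number of solutions in F_q^n to x_1^{2^m} + ... + x_n^{2^m} = 0. Then the number of solutions in F_q^{n+k} to x_1^{2^m} + ... + x_n^{2^m} + b_1 y_1^2 + ... + b_k y_k^2 = 0 equals q^{n+k-1} + η((-1)^{k/2} b_1⋯b_k) q^{k/2} (N - q^{n-1}). -/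
/-!
For `S : α → G` into a finite abelian group let `D(S) = |G| · #{S = 0} - #α` (`zeroDefect S`).
If `T : β → G` takes every nonzero value exactly `A` times, then counting the zeros of `S a + T y`
fibre by fibre gives
`D(S + T) = (#β - |G| A) · D(S)`. Over `F_q` the binary form `b₁ y₁² + b₂ y₂²` takes every nonzero
value `q - η(-b₁ b₂)` times (the cross term of the convolution is the Jacobi sum `J(η, η)`), so
each pair of squares multiplies `D` by `q η(-b₁ b₂)`. Hence
`D(S + Σ b_j y_j²) = η((-1)^(k/2) ∏ b_j) q^(k/2) D(S)` for any `S`, and the theorem is this identity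
for `S = Σ x_i^(2^m)`, divided by `q`.
-/

open Finset

section Counting

variable {G α β : Type*} [DecidableEq G] [Fintype α] [Fintype β]

/-- `|G|` times the deviation of the number of zeros of `S` from its expected value `#α / |G|`. -/
def zeroDefect [Zero G] [Fintype G] (S : α → G) : ℤ :=
  Fintype.card G * Fintype.card {a // S a = 0} - Fintype.card α

lemma zeroDefect_congr [Zero G] [Fintype G] {S : α → G} {T : β → G} (e : α ≃ β)
    (h : ∀ a, T (e a) = S a) : zeroDefect T = zeroDefect S := by
  rw [zeroDefect, zeroDefect, Fintype.card_congr e,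
    Fintype.card_congr (e.subtypeEquiv (q := fun b => T b = 0) fun a => by rw [h a])]

lemma card_add_eq_sum [AddCommGroup G] (S : α → G) (T : β → G) (c : G) :
    Fintype.card {z : α × β // S z.1 + T z.2 = c} =
      ∑ a, Fintype.card {y // T y = c - S a} := by
  rw [Fintype.card_congr (Equiv.subtypeProdEquivSigmaSubtype fun a y => S a + T y = c),
    Fintype.card_sigma]
  exact sum_congr rfl fun a _ => Fintype.card_congr <|
    Equiv.subtypeEquivRight fun y => by rw [eq_sub_iff_add_eq']

lemma sum_comp_eq_sum_card_mul [Fintype G] (S : α → G) (g : G → ℤ) :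
    ∑ a, g (S a) = ∑ x, (Fintype.card {a // S a = x} : ℤ) * g x := by
  rw [← Fintype.sum_fiberwise S fun a => g (S a)]
  refine sum_congr rfl fun x _ => ?_
  rw [sum_congr rfl fun a _ => congrArg g a.2, sum_const, card_univ, nsmul_eq_mul]

lemma sum_card_fiber [Fintype G] (S : α → G) :
    ∑ x, (Fintype.card {a // S a = x} : ℤ) = Fintype.card α := by
  simpa using (sum_comp_eq_sum_card_mul S fun _ => 1).symm

lemma sum_ite_eq_zero [Zero G] (S : α → G) (A B : ℤ) :
    ∑ a, (if S a = 0 then B else A) =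
      Fintype.card α * A + Fintype.card {a // S a = 0} * (B - A) := by
  have : ∀ a, (if S a = 0 then B else A) = A + if S a = 0 then B - A else 0 := by
    intro a; split_ifs <;> ring
  simp_rw [this, sum_add_distrib, sum_ite, sum_const_zero, add_zero, sum_const, card_univ,
    nsmul_eq_mul, Fintype.card_subtype]

lemma zeroDefect_add_of_card_eq [AddCommGroup G] [Fintype G] {S : α → G} {T : β → G} {A : ℤ}
    (hT : ∀ c ≠ 0, Fintype.card {y // T y = c} = A) :
    zeroDefect (fun z : α × β => S z.1 + T z.2) =
      (Fintype.card β - Fintype.card G * A) * zeroDefect S := by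
  set B : ℤ := (Fintype.card {y // T y = 0} : ℤ)
  have hfiber : ∀ c, (Fintype.card {y // T y = c} : ℤ) = if c = 0 then B else A := by
    intro c; split_ifs with hc
    · rw [hc]
    · exact hT c hc
  have hβ : (Fintype.card β : ℤ) = Fintype.card G * A + (B - A) := by
    rw [← sum_card_fiber T]
    simp_rw [hfiber]
    simpa using sum_ite_eq_zero (fun x : G => x) A B
  have hzeros : (Fintype.card {z : α × β // S z.1 + T z.2 = 0} : ℤ) =
      Fintype.card α * A + Fintype.card {a // S a = 0} * (B - A) := by
    rw [card_add_eq_sum, Nat.cast_sum, ← sum_ite_eq_zero]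
    simp_rw [zero_sub, hfiber, neg_eq_zero]
  rw [zeroDefect, zeroDefect, hzeros, Fintype.card_prod, Nat.cast_mul, hβ]
  ring

end Counting

section Quadratic

variable {F : Type*} [Field F] [Fintype F] [DecidableEq F]

lemma card_mul_sq_eq (hF : ringChar F ≠ 2) {b : F} (hb : b ≠ 0) (x : F) :
    (Fintype.card {y // b * y ^ 2 = x} : ℤ) = quadraticChar F (b * x) + 1 := by
  have e : {y // b * y ^ 2 = x} ≃ {y // y ^ 2 = b⁻¹ * x} :=
    Equiv.subtypeEquivRight fun y => by rw [eq_inv_mul_iff_mul_eq₀ hb]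
  have hsq : b * x = b ^ 2 * (b⁻¹ * x) := by field_simp
  rw [Fintype.card_congr e, hsq, map_mul, quadraticChar_sq_one' hb, one_mul,
    ← quadraticChar_card_sqrts hF, Set.toFinset_card]
  rfl

lemma sum_quadraticChar_mul_quadraticChar_sub (hF : ringChar F ≠ 2) {c : F} (hc : c ≠ 0) :
    ∑ x, quadraticChar F x * quadraticChar F (c - x) = -quadraticChar F (-1) := by
  have hscale : ∀ t, quadraticChar F (c * t) * quadraticChar F (c - c * t) =
      quadraticChar F t * quadraticChar F (1 - t) := by
    intro t
    rw [← mul_one_sub, map_mul, map_mul, mul_mul_mul_comm, ← map_mul, ← sq,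
      quadraticChar_sq_one' hc, one_mul]
  rw [← Equiv.sum_comp (Equiv.mulLeft₀ c hc)]
  simp only [Equiv.mulLeft₀_apply, hscale]
  have := jacobiSum_nontrivial_inv (quadraticChar_ne_one hF)
  rwa [(quadraticChar_isQuadratic F).inv] at this

lemma card_mul_sq_add_mul_sq_eq (hF : ringChar F ≠ 2) {b₁ b₂ : F} (h₁ : b₁ ≠ 0) (h₂ : b₂ ≠ 0)
    {c : F} (hc : c ≠ 0) :
    (Fintype.card {p : F × F // b₁ * p.1 ^ 2 + b₂ * p.2 ^ 2 = c} : ℤ) =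
      Fintype.card F - quadraticChar F (-(b₁ * b₂)) := by
  have hconv : (Fintype.card {p : F × F // b₁ * p.1 ^ 2 + b₂ * p.2 ^ 2 = c} : ℤ) =
      ∑ x, (quadraticChar F (b₁ * x) + 1) * (quadraticChar F (b₂ * (c - x)) + 1) := by
    rw [card_add_eq_sum (fun u => b₁ * u ^ 2) (fun v => b₂ * v ^ 2), Nat.cast_sum]
    simp_rw [card_mul_sq_eq hF h₂]
    rw [sum_comp_eq_sum_card_mul (fun u => b₁ * u ^ 2)
      fun x => quadraticChar F (b₂ * (c - x)) + 1]
    simp_rw [card_mul_sq_eq hF h₁]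
  have hexpand : ∀ x, (quadraticChar F (b₁ * x) + 1) * (quadraticChar F (b₂ * (c - x)) + 1) =
      quadraticChar F (b₁ * b₂) * (quadraticChar F x * quadraticChar F (c - x)) +
        quadraticChar F b₁ * quadraticChar F x +
          quadraticChar F b₂ * quadraticChar F (c - x) + 1 := by
    intro x; simp only [map_mul]; ring
  have hsub : ∑ x, quadraticChar F (c - x) = 0 :=
    (Equiv.sum_comp (Equiv.subLeft c) (quadraticChar F)).trans (quadraticChar_sum_zero hF)
  rw [hconv, sum_congr rfl fun x _ => hexpand x]
  simp only [sum_add_distrib, ← mul_sum, hsub, quadraticChar_sum_zero hF,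
    sum_quadraticChar_mul_quadraticChar_sub hF hc, sum_const, card_univ, nsmul_eq_mul, mul_one]
  rw [neg_eq_neg_one_mul (b₁ * b₂), map_mul (quadraticChar F) (-1)]
  ring

variable {α : Type*} [Fintype α]

lemma zeroDefect_add_mul_sq_add_mul_sq (hF : ringChar F ≠ 2) (S : α → F) {b₁ b₂ : F}
    (h₁ : b₁ ≠ 0) (h₂ : b₂ ≠ 0) :
    zeroDefect (fun z : α × (F × F) => S z.1 + (b₁ * z.2.1 ^ 2 + b₂ * z.2.2 ^ 2)) =
      quadraticChar F (-(b₁ * b₂)) * Fintype.card F * zeroDefect S := by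
  rw [zeroDefect_add_of_card_eq fun c hc => card_mul_sq_add_mul_sq_eq hF h₁ h₂ hc,
    Fintype.card_prod, Nat.cast_mul]
  ring

lemma zeroDefect_add_diagonal (hF : ringChar F ≠ 2) (S : α → F) {k : ℕ} (hk : Even k)
    (b : Fin k → F) (hb : ∀ j, b j ≠ 0) :
    zeroDefect (fun z : α × (Fin k → F) => S z.1 + ∑ j, b j * z.2 j ^ 2) =
      quadraticChar F ((-1) ^ (k / 2) * ∏ j, b j) * Fintype.card F ^ (k / 2) * zeroDefect S := by
  induction k using Nat.twoStepInduction with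
  | zero =>
    simp only [univ_eq_empty, sum_empty, prod_empty, add_zero, Nat.zero_div, pow_zero,
      mul_one, map_one, one_mul]
    exact zeroDefect_congr (Equiv.prodUnique α (Fin 0 → F)).symm fun _ => rfl
  | one => exact absurd hk Nat.not_even_one
  | more n ih _ =>
    let e : (α × (Fin n → F)) × (F × F) ≃ α × (Fin (n + 2) → F) :=
      (Equiv.prodAssoc _ _ _).trans <| Equiv.prodCongr (Equiv.refl α) <|
        (Equiv.prodComm _ _).trans <| (Equiv.prodAssoc _ _ _).trans <|
          (Equiv.prodCongr (Equiv.refl F) (Fin.consEquiv fun _ : Fin (n + 1) => F)).trans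
            (Fin.consEquiv fun _ : Fin (n + 2) => F)
    have he := zeroDefect_congr e
      (T := fun z : α × (Fin (n + 2) → F) => S z.1 + ∑ j, b j * z.2 j ^ 2)
      (S := fun w => (S w.1.1 + ∑ j, b j.succ.succ * w.1.2 j ^ 2) +
        (b 0 * w.2.1 ^ 2 + b 1 * w.2.2 ^ 2)) (by
        rintro ⟨⟨a, y⟩, u, v⟩
        simp only [e, Equiv.trans_apply, Equiv.prodAssoc_apply, Equiv.prodCongr_apply,
          Equiv.coe_refl, Equiv.coe_prodComm, Prod.map_apply, id_eq, Prod.swap_prod_mk,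
          Fin.consEquiv_apply, Fin.sum_univ_succ, Fin.cons_zero, Fin.cons_succ,
          Fin.succ_zero_eq_one]
        ring)
    rw [he, zeroDefect_add_mul_sq_add_mul_sq hF
      (fun w : α × (Fin n → F) => S w.1 + ∑ j, b j.succ.succ * w.2 j ^ 2) (hb 0) (hb 1),
      ih (by simpa [Nat.even_add] using hk) _ fun j => hb _]
    have hsign : (-1 : F) ^ ((n + 2) / 2) * ∏ j, b j =
        ((-1) ^ (n / 2) * ∏ j : Fin n, b j.succ.succ) * -(b 0 * b 1) := by
      rw [Fin.prod_univ_succ, Fin.prod_univ_succ, Fin.succ_zero_eq_one,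
        show (n + 2) / 2 = n / 2 + 1 by omega]
      ring
    rw [hsign, map_mul (quadraticChar F) _ (-(b 0 * b 1)), show (n + 2) / 2 = n / 2 + 1 by omega]
    ring

end Quadratic

theorem stmt18_general (m k n : ℕ) (hn : 0 < n) (hke : Even k)
    (F : Type*) [Field F] [Fintype F] [DecidableEq F] (hodd : Odd (Fintype.card F))
    (b : Fin k → F) (hb : ∀ j, b j ≠ 0) :
    (Fintype.card {z : (Fin n → F) × (Fin k → F) //
        ∑ i, z.1 i ^ 2 ^ m + ∑ j, b j * z.2 j ^ 2 = 0} : ℤ) =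
      (Fintype.card F : ℤ) ^ (n + k - 1) +
        quadraticChar F ((-1 : F) ^ (k / 2) * ∏ j, b j) * (Fintype.card F : ℤ) ^ (k / 2) *
          ((Fintype.card {x : Fin n → F // ∑ i, x i ^ 2 ^ m = 0} : ℤ) -
            (Fintype.card F : ℤ) ^ (n - 1)) := by
  have hF : ringChar F ≠ 2 := fun h =>
    Nat.not_even_iff_odd.mpr hodd (Nat.even_iff.mpr (FiniteField.even_card_of_char_two h))
  have hdefect := zeroDefect_add_diagonal hF (fun x : Fin n → F => ∑ i, x i ^ 2 ^ m) hke b hb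
  simp only [zeroDefect, Fintype.card_prod, Fintype.card_fun, Fintype.card_fin] at hdefect
  obtain ⟨n, rfl⟩ : ∃ n', n = n' + 1 := ⟨n - 1, by omega⟩
  have hq : (Fintype.card F : ℤ) ≠ 0 := by exact_mod_cast Fintype.card_ne_zero
  apply mul_left_cancel₀ hq
  rw [show n + 1 + k - 1 = n + k by omega, Nat.add_sub_cancel]
  push_cast at hdefect
  linear_combination hdefect

theorem stmt18 (m k n : ℕ) (hm : 0 < m) (hn : 0 < n) (hk : 2 ≤ k) (hke : Even k)
    (F : Type*) [Field F] [Fintype F] [DecidableEq F] (hodd : Odd (Fintype.card F))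
    (hdvd : 2 ^ m ∣ Fintype.card F - 1)
    (b : Fin k → F) (hb : ∀ j, b j ≠ 0) :
    (Fintype.card {z : (Fin n → F) × (Fin k → F) //
        ∑ i, z.1 i ^ 2 ^ m + ∑ j, b j * z.2 j ^ 2 = 0} : ℤ) =
      (Fintype.card F : ℤ) ^ (n + k - 1) +
        quadraticChar F ((-1 : F) ^ (k / 2) * ∏ j, b j) * (Fintype.card F : ℤ) ^ (k / 2) *
          ((Fintype.card {x : Fin n → F // ∑ i, x i ^ 2 ^ m = 0} : ℤ) -
            (Fintype.card F : ℤ) ^ (n - 1)) :=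
  stmt18_general m k n hn hke F hodd b hb
end

section
/- Let q be an odd prime power and d_1,...,d_n positive integers each dividing q-1, with a_1,...,a_n ∈ F_q^*. For each j let w_j = gcd(d_j, lcm(d_1,...,d_{j-1},d_{j+1},...,d_n)). Then the number of solutions in F_q^n to a_1 x_1^{d_1} + ... + a_n x_n^{d_n} = 0 equals the number of solutions to a_1 x_1^{w_1} + ... + a_n x_n^{w_n} = 0. -/
/-!
Expanding the number of `m`-th roots of each `tᵢ` as a sum of multiplicative characters of order
dividing `m` (plus the indicator of `0`), the number of solutions becomes a sum, over tuples of
such characters `(χᵢ)`, of sums of `∏ χᵢ(tᵢ)` over the hyperplane `∑ aᵢ tᵢ = 0`. The hyperplane is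
invariant under scaling, so only tuples with `∏ χᵢ = 1` contribute. For such a tuple,
`χⱼ = (∏_{i ≠ j} χᵢ)⁻¹` has order dividing both `dⱼ` and `lcm_{i ≠ j} dᵢ`, hence dividing `wⱼ`:
the surviving terms are the same for the exponents `d` and `w`.
-/

open Finset

lemma MulChar.prod_apply_units {ι R R' : Type*} [CommMonoid R] [CommMonoidWithZero R']
    (s : Finset ι) (χ : ι → MulChar R R') (u : Rˣ) : (∏ i ∈ s, χ i) u = ∏ i ∈ s, χ i u := by
  classical
  induction s using Finset.induction_on with
  | empty => simp
  | insert j s hj ih => rw [prod_insert hj, prod_insert hj, MulChar.mul_apply, ih]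

namespace DiagonalEquation

lemma pow_gcd_lcm_erase_eq_one {M ι : Type*} [CommMonoid M] [DecidableEq ι] {s : Finset ι}
    {x : ι → M} {d : ι → ℕ} (hx : ∀ i ∈ s, x i ^ d i = 1) (hprod : ∏ i ∈ s, x i = 1) {j : ι}
    (hj : j ∈ s) : x j ^ Nat.gcd (d j) ((s.erase j).lcm d) = 1 := by
  have hrest : (∏ i ∈ s.erase j, x i) ^ (s.erase j).lcm d = 1 := by
    rw [← prod_pow]
    refine prod_eq_one fun i hi ↦ ?_
    obtain ⟨k, hk⟩ := dvd_lcm (f := d) hi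
    rw [hk, pow_mul, hx i (mem_of_mem_erase hi), one_pow]
  have hlcm : x j ^ (s.erase j).lcm d = 1 :=
    calc x j ^ (s.erase j).lcm d = (x j * ∏ i ∈ s.erase j, x i) ^ (s.erase j).lcm d := by
          rw [mul_pow, hrest, mul_one]
      _ = 1 := by rw [mul_prod_erase s x hj, hprod, one_pow]
  exact pow_gcd_eq_one.mpr ⟨hx j hj, hlcm⟩

lemma card_filter_comp_eq_sum_prod {ι α β : Type*} [Fintype ι] [DecidableEq ι] [Fintype α]
    [DecidableEq β] [Fintype β] (f : ι → α → β) (P : (ι → β) → Prop) [DecidablePred P] :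
    #{x : ι → α | P fun i ↦ f i (x i)} = ∑ t : ι → β with P t, ∏ i, #{y | f i y = t i} := by
  rw [card_eq_sum_card_fiberwise (f := fun x i ↦ f i (x i)) (t := {t | P t})
    fun x hx ↦ by simpa using hx]
  refine sum_congr rfl fun t ht ↦ ?_
  rw [← Fintype.card_piFinset]
  congr 1
  ext x
  simp only [mem_filter, mem_univ, true_and, Fintype.mem_piFinset, funext_iff] at ht ⊢
  refine ⟨And.right, fun h ↦ ⟨?_, h⟩⟩
  rwa [show (fun i ↦ f i (x i)) = t from funext h]

section Characters

variable {F : Type*} [Field F] [Fintype F]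

noncomputable instance : Fintype (MulChar F ℂ) := Fintype.ofFinite _

/-- `none` stands for the indicator function of `0`; it transforms under scaling like the trivial
character, which is its `weight`. -/
abbrev AugChar (F : Type*) [Field F] [Fintype F] := Option (MulChar F ℂ)

namespace AugChar

noncomputable def weight : AugChar F → MulChar F ℂ
  | none => 1
  | some χ => χ

variable (F) in
noncomputable def torsion (m : ℕ) : Finset (AugChar F) := {ψ | ψ.weight ^ m = 1}

lemma mem_torsion {m : ℕ} {ψ : AugChar F} : ψ ∈ torsion F m ↔ ψ.weight ^ m = 1 := by
  simp [torsion]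

lemma torsion_mono {m m' : ℕ} (h : m ∣ m') : torsion F m ⊆ torsion F m' := by
  obtain ⟨k, rfl⟩ := h
  intro ψ hψ
  rw [mem_torsion] at hψ ⊢
  rw [pow_mul, hψ, one_pow]

variable [DecidableEq F]

noncomputable def eval : AugChar F → F → ℂ
  | none, t => if t = 0 then 1 else 0
  | some χ, t => χ t

lemma eval_mul (ψ : AugChar F) {c : F} (hc : c ≠ 0) (t : F) :
    ψ.eval (c * t) = ψ.weight c * ψ.eval t := by
  cases ψ with
  | none => simp [eval, weight, MulChar.one_apply (isUnit_iff_ne_zero.mpr hc), hc]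
  | some χ => simp [eval, weight]

/-- The sum is invariant under the scaling `t ↦ c • t`, which multiplies it by
`(∏ i, (g i).weight) c`. -/
lemma sum_prod_eval_eq_zero {ι : Type*} [Fintype ι] {V : Finset (ι → F)}
    (hV : ∀ c : Fˣ, ∀ t ∈ V, c • t ∈ V) (g : ι → AugChar F) (hg : ∏ i, (g i).weight ≠ 1) :
    ∑ t ∈ V, ∏ i, (g i).eval (t i) = 0 := by
  obtain ⟨c, hc⟩ := MulChar.ne_one_iff.mp hg
  refine eq_zero_of_mul_eq_self_left hc ?_
  calc (∏ i, (g i).weight) c * ∑ t ∈ V, ∏ i, (g i).eval (t i)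
      = ∑ t ∈ V, ∏ i, (g i).eval ((c • t) i) := by
        simp only [MulChar.prod_apply_units, mul_sum, ← prod_mul_distrib, Pi.smul_apply,
          Units.smul_def, smul_eq_mul, eval_mul _ c.ne_zero]
    _ = ∑ t ∈ V, ∏ i, (g i).eval (t i) :=
        sum_nbij' (c • ·) (c⁻¹ • ·) (hV c) (hV c⁻¹) (fun t _ ↦ inv_smul_smul c t)
          (fun t _ ↦ smul_inv_smul c t) fun _ _ ↦ rfl

end AugChar

variable [DecidableEq F]

lemma sum_mulChar_apply (a : F) :
    ∑ χ : MulChar F ℂ, χ a = if a = 1 then (Fintype.card Fˣ : ℂ) else 0 := by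
  split_ifs with ha
  · subst ha
    simp only [map_one, sum_const, card_univ, nsmul_eq_mul, mul_one, ← Nat.card_eq_fintype_card,
      MulChar.card_eq_card_units_of_hasEnoughRootsOfUnity]
  · obtain ⟨χ, hχ⟩ := MulChar.exists_apply_ne_one_of_hasEnoughRootsOfUnity F ℂ ha
    refine eq_zero_of_mul_eq_self_left hχ ?_
    simp only [mul_sum, ← MulChar.mul_apply]
    exact Fintype.sum_bijective _ (Group.mulLeft_bijective χ) _ _ fun _ ↦ rfl

lemma sum_mulChar_pow_apply {m : ℕ} (hm : m ≠ 0) (χ : MulChar F ℂ) :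
    ∑ y, χ y ^ m = if χ ^ m = 1 then (Fintype.card Fˣ : ℂ) else 0 := by
  simp only [← MulChar.pow_apply' χ hm]
  split_ifs with h
  · rw [h, MulChar.sum_one_eq_card_units]
  · exact MulChar.sum_eq_zero_of_ne_one h

/-- Orthogonality applied to `y ^ m * t⁻¹` counts the `m`-th roots of `t`. -/
lemma card_pow_eq_of_ne_zero {m : ℕ} (hm : m ≠ 0) {t : F} (ht : t ≠ 0) :
    (#{y | y ^ m = t} : ℂ) = ∑ χ : MulChar F ℂ with χ ^ m = 1, χ t := by
  have hq : (Fintype.card Fˣ : ℂ) ≠ 0 := by exact_mod_cast Fintype.card_ne_zero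
  refine mul_left_cancel₀ hq ?_
  calc (Fintype.card Fˣ : ℂ) * #{y | y ^ m = t}
      = ∑ y, ∑ χ : MulChar F ℂ, χ (y ^ m * t⁻¹) := by
        simp only [sum_mulChar_apply, mul_inv_eq_one₀ ht, sum_ite, sum_const_zero, add_zero,
          sum_const, nsmul_eq_mul, mul_comm]
    _ = ∑ χ : MulChar F ℂ, χ⁻¹ t * ∑ y, χ y ^ m := by
        rw [sum_comm]
        simp only [map_mul, map_pow, mul_sum, MulChar.inv_apply', mul_comm]
    _ = (Fintype.card Fˣ : ℂ) * ∑ χ : MulChar F ℂ with χ ^ m = 1, χ t := by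
        simp only [sum_mulChar_pow_apply hm, mul_ite, mul_zero, ← sum_filter, mul_sum]
        exact sum_nbij' (·⁻¹) (·⁻¹) (by simp [inv_pow]) (by simp [inv_pow])
          (fun _ _ ↦ inv_inv _) (fun _ _ ↦ inv_inv _) fun _ _ ↦ mul_comm _ _

lemma card_pow_eq {m : ℕ} (hm : m ≠ 0) (t : F) :
    (#{y | y ^ m = t} : ℂ) = ∑ ψ ∈ AugChar.torsion F m, ψ.eval t := by
  rw [AugChar.torsion, sum_filter, Fintype.sum_option]
  simp only [AugChar.weight, AugChar.eval, one_pow, if_true]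
  rcases eq_or_ne t 0 with rfl | ht
  · simp [pow_eq_zero_iff hm, filter_eq', MulChar.map_zero]
  · rw [card_pow_eq_of_ne_zero hm ht, sum_filter, if_neg ht, zero_add]
    congr

lemma card_diagonal_eq_sum {ι : Type*} [Fintype ι] [DecidableEq ι] (a : ι → F) {e : ι → ℕ}
    (he : ∀ i, e i ≠ 0) :
    (#{x : ι → F | ∑ i, a i * x i ^ e i = 0} : ℂ) =
      ∑ g ∈ Fintype.piFinset fun i ↦ AugChar.torsion F (e i),
        ∑ t : ι → F with ∑ i, a i * t i = 0, ∏ i, (g i).eval (t i) := by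
  rw [card_filter_comp_eq_sum_prod (fun i y ↦ y ^ e i) fun t ↦ ∑ i, a i * t i = 0, sum_comm]
  push_cast
  simp only [card_pow_eq (he _), prod_univ_sum]

end Characters

end DiagonalEquation

open DiagonalEquation in
theorem stmt19_general (n : ℕ)
    (F : Type*) [Field F] [Fintype F] [DecidableEq F]
    (d : Fin n → ℕ) (hdpos : ∀ j, 0 < d j)
    (a : Fin n → F)
    (w : Fin n → ℕ) (hw : ∀ j, w j = Nat.gcd (d j) (Finset.lcm (Finset.univ.erase j) d)) :
    Fintype.card {x : Fin n → F // ∑ i, a i * x i ^ d i = 0} =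
      Fintype.card {x : Fin n → F // ∑ i, a i * x i ^ w i = 0} := by
  have hw_dvd (j : Fin n) : w j ∣ d j := hw j ▸ Nat.gcd_dvd_left _ _
  have hw_ne (j : Fin n) : w j ≠ 0 := hw j ▸ (Nat.gcd_pos_of_pos_left _ (hdpos j)).ne'
  rw [Fintype.card_subtype, Fintype.card_subtype, ← Nat.cast_inj (R := ℂ),
    card_diagonal_eq_sum a fun j ↦ (hdpos j).ne', card_diagonal_eq_sum a hw_ne]
  refine (sum_subset (Fintype.piFinset_subset _ _ fun j ↦ AugChar.torsion_mono (hw_dvd j))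
    fun g hgd hgw ↦ AugChar.sum_prod_eval_eq_zero (fun c t ht ↦ ?_) g fun hprod ↦ hgw ?_).symm
  · simp only [mem_filter, mem_univ, true_and, Pi.smul_apply, Units.smul_def, smul_eq_mul,
      mul_left_comm, ← mul_sum] at ht ⊢
    rw [ht, mul_zero]
  · rw [Fintype.mem_piFinset] at hgd ⊢
    intro j
    rw [AugChar.mem_torsion, hw j]
    exact pow_gcd_lcm_erase_eq_one (fun i _ ↦ AugChar.mem_torsion.mp (hgd i)) hprod (mem_univ j)

theorem stmt19 (n : ℕ)
    (F : Type*) [Field F] [Fintype F] [DecidableEq F] (hodd : Odd (Fintype.card F))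
    (d : Fin n → ℕ) (hdpos : ∀ j, 0 < d j) (hdvd : ∀ j, d j ∣ Fintype.card F - 1)
    (a : Fin n → F) (ha : ∀ j, a j ≠ 0)
    (w : Fin n → ℕ) (hw : ∀ j, w j = Nat.gcd (d j) (Finset.lcm (Finset.univ.erase j) d)) :
    Fintype.card {x : Fin n → F // ∑ i, a i * x i ^ d i = 0} =
      Fintype.card {x : Fin n → F // ∑ i, a i * x i ^ w i = 0} :=
  stmt19_general n F d hdpos a w hw
end
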